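/- Let G be a finite simple connected graph on vertex set V, let U ⊆ V be nonempty, and let T be a tree on U rooted at r whose edges are edges of G and which satisfies invariants I1 and I2 with respect to G. Then T extends to a DFS tree of G: there exists a spanning tree T* of G rooted at r whose edge set contains the edge set of T and in which every edge of G joins two vertices comparable in T*. -/

import Mathlib

namespace StreamDFS

/-- `u` is an ancestor of `v` in the tree `T` rooted at `r`:
`u` lies on (every) path in `T` from `r` to `v`. -/
def IsAncestor {V : Type*} (T : SimpleGraph V) (r u v : V) : Prop :=
  ∀ p : T.Walk r v, p.IsPath → u ∈ p.support

/-- `u` and `v` are comparable in the tree `T` rooted at `r`: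
one is an ancestor of the other. -/
def Cmp {V : Type*} (T : SimpleGraph V) (r u v : V) : Prop :=
  IsAncestor T r u v ∨ IsAncestor T r v u

/-- `u` is a proper ancestor of `v` in the tree `T` rooted at `r`. -/
def ProperAncestor {V : Type*} (T : SimpleGraph V) (r u v : V) : Prop :=
  IsAncestor T r u v ∧ u ≠ v

/-- The depth (level) of `v` in the tree `T` rooted at `r`. -/
noncomputable def depth {V : Type*} (T : SimpleGraph V) (r v : V) : ℕ := T.dist r v

/-- `T` is a tree on the vertex set `U` all of whose edges are edges of `G`:
its edges lie within `U` and it induces a tree on `U`. -/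
def TreeOn {V : Type*} (G T : SimpleGraph V) (U : Set V) : Prop :=
  T ≤ G ∧ (∀ u v, T.Adj u v → u ∈ U ∧ v ∈ U) ∧ (T.induce U).IsTree

/-- Invariant `I₁`: every edge of `G` with both endpoints in `U` joins two
vertices comparable in `T`. -/
def Inv1 {V : Type*} (G T : SimpleGraph V) (U : Set V) (r : V) : Prop :=
  ∀ u v, G.Adj u v → u ∈ U → v ∈ U → Cmp T r u v

/-- Invariant `I₂`: for every connected component of `G[V∖U]`, the vertices of `U`
adjacent in `G` to that component are pairwise comparable in `T`. -/
def Inv2 {V : Type*} (G T : SimpleGraph V) (U : Set V) (r : V) : Prop :=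
  ∀ u v (hu : u ∉ U) (hv : v ∉ U),
    (G.induce Uᶜ).Reachable ⟨u, hu⟩ ⟨v, hv⟩ →
    ∀ w z, w ∈ U → z ∈ U → G.Adj w u → G.Adj z v → Cmp T r w z

/-- The connected component of `G[V∖U]` containing `c₀` (for `c₀ ∉ U`). -/
def compOf {V : Type*} (G : SimpleGraph V) (U : Set V) (c₀ : V) : Set V :=
  {a | ∃ (hc : c₀ ∉ U) (ha : a ∉ U), (G.induce Uᶜ).Reachable ⟨c₀, hc⟩ ⟨a, ha⟩}

/-!
Grow `T` one leaf at a time. While `U ≠ V`, connectivity of `G` yields a component `C` of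
`G[V ∖ U]` adjacent to `U`. By `I₂` the vertices of `U` adjacent to `C` are pairwise comparable,
so they all lie on the root path of the deepest one, `d`. Hang a neighbour `a ∈ C` of `d` below
`d`: every `U`-neighbour of `a` is an ancestor of `d`, hence of `a`, which gives `I₁`; the
components of `G[V ∖ (U ∪ {a})]` inside `C` are attached only to ancestors of `a`, the others
keep their old attachments, which gives `I₂`. When `U = V`, invariant `I₁` is the DFS property.
-/

section

open SimpleGraph Walk

variable {V : Type*}

section Ancestor

variable {T T' : SimpleGraph V} {r u v : V}

lemma isAncestor_refl (T : SimpleGraph V) (r v : V) : IsAncestor T r v v :=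
  fun p _ => p.end_mem_support

lemma isAncestor_of_mem_support (hT : T.IsAcyclic) {p : T.Walk r v} (hp : p.IsPath)
    (hu : u ∈ p.support) : IsAncestor T r u v := fun q hq => by
  obtain rfl : q = p :=
    congrArg Subtype.val ((hT.subsingleton_path r v).elim ⟨q, hq⟩ ⟨p, hp⟩)
  exact hu

lemma IsAncestor.mono (h : IsAncestor T r u v) (hle : T ≤ T') (hT' : T'.IsAcyclic)
    (hrv : T.Reachable r v) : IsAncestor T' r u v := by
  obtain ⟨p, hp⟩ := hrv.exists_isPath
  refine isAncestor_of_mem_support hT' (hp.mapLe hle) ?_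
  rw [support_mapLe_eq_support]
  exact h p hp

lemma Cmp.mono (h : Cmp T r u v) (hle : T ≤ T') (hT' : T'.IsAcyclic)
    (hru : T.Reachable r u) (hrv : T.Reachable r v) : Cmp T' r u v :=
  h.imp (·.mono hle hT' hrv) (·.mono hle hT' hru)

lemma IsAncestor.depth_lt (h : IsAncestor T r u v) (hrv : T.Reachable r v) (hne : u ≠ v) :
    depth T r u < depth T r v := by
  classical
  obtain ⟨p, hp, hlen⟩ := hrv.exists_path_of_dist
  have hu := h p hp
  have hsplit : (p.takeUntil u hu).length + (p.dropUntil u hu).length = p.length := by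
    rw [← length_append, p.take_spec hu]
  have hdrop : (p.dropUntil u hu).length ≠ 0 := fun h0 => hne (eq_of_length_eq_zero h0)
  have hdist : T.dist r u ≤ (p.takeUntil u hu).length := dist_le _
  unfold depth
  omega

end Ancestor

section Support

variable {G : SimpleGraph V} {s : Set V}

lemma mem_of_mem_walk_support (hs : G.support ⊆ s) {x y : V} (hx : x ∈ s) (p : G.Walk x y) :
    ∀ v ∈ p.support, v ∈ s := by
  intro v hv
  by_cases hp : p.Nil
  · rw [nil_iff_support_eq.mp hp, List.mem_singleton] at hv
    exact hv ▸ hx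
  · exact hs (mem_support_of_mem_walk_support p hp hv)

lemma isAcyclic_of_isAcyclic_induce (hs : G.support ⊆ s) (h : (G.induce s).IsAcyclic) :
    G.IsAcyclic := by
  intro x c hc
  have hx : x ∈ s := hs (mem_support_of_mem_walk_support c hc.not_nil c.start_mem_support)
  refine h (c.induce s (mem_of_mem_walk_support hs hx c)) ?_
  rw [← isCycle_map_iff_of_injective (f := (Embedding.induce s).toHom) Subtype.val_injective,
    map_induce]
  exact hc

end Support

lemma adj_sup_edge {G : SimpleGraph V} {s t : V} (hst : s ≠ t) : (G ⊔ edge s t).Adj s t :=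
  Or.inr ((edge_adj _ _ _ _).2 ⟨Or.inl ⟨rfl, rfl⟩, hst⟩)

section Component

variable {G : SimpleGraph V} {U : Set V} {a b c : V}

lemma notMem_of_mem_compOf (hb : b ∈ compOf G U a) : b ∉ U := hb.2.1

lemma mem_compOf_self (ha : a ∉ U) : a ∈ compOf G U a := ⟨ha, ha, .refl _⟩

lemma mem_compOf_comm (hb : b ∈ compOf G U a) : a ∈ compOf G U b :=
  let ⟨ha, hb, h⟩ := hb; ⟨hb, ha, h.symm⟩

lemma mem_compOf_trans (hb : b ∈ compOf G U a) (hc : c ∈ compOf G U b) : c ∈ compOf G U a :=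
  let ⟨ha, _, hab⟩ := hb; let ⟨_, hc, hbc⟩ := hc; ⟨ha, hc, hab.trans hbc⟩

lemma mem_compOf_of_adj (hb : b ∈ compOf G U a) (hc : c ∉ U) (hbc : G.Adj b c) :
    c ∈ compOf G U a :=
  mem_compOf_trans hb ⟨notMem_of_mem_compOf hb, hc, (induce_adj.2 hbc).reachable⟩

lemma mem_compOf_of_reachable_of_subset {U' : Set V} (hU : U ⊆ U') (ha : a ∉ U') (hb : b ∉ U')
    (h : (G.induce U'ᶜ).Reachable ⟨a, ha⟩ ⟨b, hb⟩) : b ∈ compOf G U a :=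
  ⟨fun h' => ha (hU h'), fun h' => hb (hU h'),
    h.map (induceHomOfLE G (Set.compl_subset_compl.2 hU)).toHom⟩

lemma Inv2.cmp_of_mem_compOf {T : SimpleGraph V} {r w z : V} (h2 : Inv2 G T U r)
    (hb : b ∈ compOf G U a) (hc : c ∈ compOf G U a) (hw : w ∈ U) (hz : z ∈ U)
    (hwb : G.Adj w b) (hzc : G.Adj z c) : Cmp T r w z :=
  let ⟨hbU, hcU, hbc⟩ := mem_compOf_trans (mem_compOf_comm hb) hc
  h2 b c hbU hcU hbc w z hw hz hwb hzc

end Component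

def IsBelowAttachments (G T : SimpleGraph V) (U : Set V) (r a d : V) : Prop :=
  ∀ z ∈ U, ∀ b ∈ compOf G U a, G.Adj z b → IsAncestor T r z d

/-- The state of the incremental construction, with `TreeOn G T U` recast as acyclicity of `T`
together with reachability of `U` from `r`, which is what adding a leaf visibly preserves. -/
structure IsPartialDFSTree (G T : SimpleGraph V) (U : Set V) (r : V) : Prop where
  le : T ≤ G
  support_subset : T.support ⊆ U
  isAcyclic : T.IsAcyclic
  root_mem : r ∈ U
  reachable : ∀ u ∈ U, T.Reachable r u
  inv1 : Inv1 G T U r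
  inv2 : Inv2 G T U r

variable {G T : SimpleGraph V} {U : Set V} {r : V}

lemma TreeOn.isPartialDFSTree (hT : TreeOn G T U) (hr : r ∈ U) (h1 : Inv1 G T U r)
    (h2 : Inv2 G T U r) : IsPartialDFSTree G T U r := by
  obtain ⟨hTG, hTU, htree⟩ := hT
  have hsupp : T.support ⊆ U := fun u ⟨v, huv⟩ => (hTU u v huv).1
  exact
    { le := hTG
      support_subset := hsupp
      isAcyclic := isAcyclic_of_isAcyclic_induce hsupp htree.isAcyclic
      root_mem := hr
      reachable := fun u hu =>
        (htree.connected.preconnected ⟨r, hr⟩ ⟨u, hu⟩).map (Embedding.induce U).toHom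
      inv1 := h1
      inv2 := h2 }

namespace IsPartialDFSTree

lemma isTree_of_eq_univ (hP : IsPartialDFSTree G T U r) (hU : U = Set.univ) :
    T.IsTree ∧ ∀ u v, G.Adj u v → Cmp T r u v := by
  subst hU
  exact ⟨⟨(connected_iff_exists_forall_reachable T).2 ⟨r, fun v => hP.reachable v trivial⟩,
    hP.isAcyclic⟩, fun u v huv => hP.inv1 u v huv trivial trivial⟩

lemma exists_deepest_attachment [Finite V] (hP : IsPartialDFSTree G T U r) (hG : G.Connected)
    (hU : U ≠ Set.univ) :
    ∃ d a, d ∈ U ∧ a ∉ U ∧ G.Adj d a ∧ IsBelowAttachments G T U r a d := by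
  obtain ⟨x, hx⟩ := (Set.ne_univ_iff_exists_notMem U).mp hU
  obtain ⟨⟨⟨w₀, a₀⟩, hadj₀⟩, -, hw₀, ha₀⟩ :=
    (hG.preconnected r x).some.exists_boundary_dart U hP.root_mem hx
  set N := {z | z ∈ U ∧ ∃ b ∈ compOf G U a₀, G.Adj z b}
  obtain ⟨d, ⟨hd, a, ha, hda⟩, hdeepest⟩ := Set.exists_max_image N (depth T r) N.toFinite
    ⟨w₀, hw₀, a₀, mem_compOf_self ha₀, hadj₀⟩
  refine ⟨d, a, hd, notMem_of_mem_compOf ha, hda, fun z hz b hb hzb => ?_⟩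
  have hbN : b ∈ compOf G U a₀ := mem_compOf_trans ha hb
  rcases hP.inv2.cmp_of_mem_compOf hbN ha hz hd hzb hda with hzd | hdz
  · exact hzd
  obtain rfl | hne := eq_or_ne d z
  · exact isAncestor_refl T r d
  · exact absurd (hdeepest z ⟨hz, b, hbN, hzb⟩)
      (not_le.2 (hdz.depth_lt (hP.reachable z hz) hne))

section AddLeaf

variable {d a : V}

lemma not_reachable_of_mem_of_notMem (hP : IsPartialDFSTree G T U r) (hd : d ∈ U)
    (ha : a ∉ U) : ¬T.Reachable d a := fun h =>
  ha (hP.support_subset (mem_support_of_reachable (fun h' => ha (h' ▸ hd)) h.symm))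

lemma isAcyclic_sup_edge (hP : IsPartialDFSTree G T U r) (hd : d ∈ U) (ha : a ∉ U) :
    (T ⊔ edge d a).IsAcyclic :=
  hP.isAcyclic.sup_edge_of_not_reachable (hP.not_reachable_of_mem_of_notMem hd ha)

lemma cmp_sup_edge (hP : IsPartialDFSTree G T U r) (hd : d ∈ U) (ha : a ∉ U) {w z : V}
    (hw : w ∈ U) (hz : z ∈ U) (h : Cmp T r w z) : Cmp (T ⊔ edge d a) r w z :=
  h.mono le_sup_left (hP.isAcyclic_sup_edge hd ha) (hP.reachable w hw) (hP.reachable z hz)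

lemma isAncestor_sup_edge (hP : IsPartialDFSTree G T U r) (hd : d ∈ U) (ha : a ∉ U) {z : V}
    (h : IsAncestor T r z d) : IsAncestor (T ⊔ edge d a) r z a := by
  obtain ⟨p, hp⟩ := (hP.reachable d hd).exists_isPath
  have hap : a ∉ (p.mapLe (le_sup_left : T ≤ T ⊔ edge d a)).support := by
    rw [support_mapLe_eq_support]
    exact fun h' => ha (mem_of_mem_walk_support hP.support_subset hP.root_mem p a h')
  refine isAncestor_of_mem_support (hP.isAcyclic_sup_edge hd ha)
    ((hp.mapLe le_sup_left).concat hap (adj_sup_edge (ne_of_mem_of_not_mem hd ha))) ?_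
  rw [support_concat, support_mapLe_eq_support]
  exact List.mem_append_left _ (h p hp)

lemma inv1_sup_edge (hP : IsPartialDFSTree G T U r) (hd : d ∈ U) (ha : a ∉ U)
    (hdeep : IsBelowAttachments G T U r a d) :
    Inv1 G (T ⊔ edge d a) (insert a U) r := by
  rintro u v huv (rfl | hu) (rfl | hv)
  · exact absurd huv (G.loopless.irrefl _)
  · exact Or.inr (hP.isAncestor_sup_edge hd ha (hdeep v hv u (mem_compOf_self ha) huv.symm))
  · exact Or.inl (hP.isAncestor_sup_edge hd ha (hdeep u hu v (mem_compOf_self ha) huv))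
  · exact hP.cmp_sup_edge hd ha hu hv (hP.inv1 u v huv hu hv)

lemma inv2_sup_edge (hP : IsPartialDFSTree G T U r) (hd : d ∈ U) (ha : a ∉ U)
    (hdeep : IsBelowAttachments G T U r a d) :
    Inv2 G (T ⊔ edge d a) (insert a U) r := by
  intro u v hu hv huv w z hw hz hwu hzv
  have huU : u ∉ U := mt (Set.mem_insert_of_mem a) hu
  have hvU : v ∉ U := mt (Set.mem_insert_of_mem a) hv
  have hvu : v ∈ compOf G U u :=
    mem_compOf_of_reachable_of_subset (Set.subset_insert a U) hu hv huv
  rcases hw with rfl | hw <;> rcases hz with rfl | hz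
  · exact Or.inl (isAncestor_refl _ _ _)
  · have hva : v ∈ compOf G U w :=
      mem_compOf_trans (mem_compOf_of_adj (mem_compOf_self ha) huU hwu) hvu
    exact Or.inr (hP.isAncestor_sup_edge hd ha (hdeep z hz v hva hzv))
  · have hua : u ∈ compOf G U z :=
      mem_compOf_trans (mem_compOf_of_adj (mem_compOf_self ha) hvU hzv) (mem_compOf_comm hvu)
    exact Or.inl (hP.isAncestor_sup_edge hd ha (hdeep w hw u hua hwu))
  · exact hP.cmp_sup_edge hd ha hw hz
      (hP.inv2.cmp_of_mem_compOf (mem_compOf_self huU) hvu hw hz hwu hzv)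

lemma addLeaf (hP : IsPartialDFSTree G T U r) (hd : d ∈ U) (ha : a ∉ U) (hda : G.Adj d a)
    (hdeep : IsBelowAttachments G T U r a d) :
    IsPartialDFSTree G (T ⊔ edge d a) (insert a U) r where
  le := sup_le hP.le ((edge_le_iff G).2 (Or.inr hda))
  support_subset := by
    rintro x ⟨y, hxy | hxy⟩
    · exact Set.mem_insert_of_mem a (hP.support_subset ⟨y, hxy⟩)
    · rcases ((edge_adj _ _ _ _).1 hxy).1 with ⟨rfl, -⟩ | ⟨rfl, -⟩
      · exact Set.mem_insert_of_mem a hd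
      · exact Set.mem_insert x U
  isAcyclic := hP.isAcyclic_sup_edge hd ha
  root_mem := Set.mem_insert_of_mem a hP.root_mem
  reachable := by
    rintro u (rfl | hu)
    · exact ((hP.reachable d hd).mono le_sup_left).trans (adj_sup_edge hda.ne).reachable
    · exact (hP.reachable u hu).mono le_sup_left
  inv1 := hP.inv1_sup_edge hd ha hdeep
  inv2 := hP.inv2_sup_edge hd ha hdeep

end AddLeaf

theorem exists_dfsTree [Finite V] {T : SimpleGraph V} {U : Set V}
    (hP : IsPartialDFSTree G T U r) (hG : G.Connected) :
    ∃ Tstar : SimpleGraph V, T ≤ Tstar ∧ Tstar ≤ G ∧ Tstar.IsTree ∧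
      ∀ u v, G.Adj u v → Cmp Tstar r u v := by
  by_cases hU : U = Set.univ
  · exact ⟨T, le_rfl, hP.le, hP.isTree_of_eq_univ hU⟩
  obtain ⟨d, a, hd, ha, hda, hdeep⟩ := hP.exists_deepest_attachment hG hU
  obtain ⟨Tstar, hle, hTstar⟩ := (hP.addLeaf hd ha hda hdeep).exists_dfsTree hG
  exact ⟨Tstar, le_sup_left.trans hle, hTstar⟩
termination_by Uᶜ.ncard
decreasing_by exact Set.ncard_lt_ncard (compl_lt_compl_iff_lt.2 (Set.ssubset_insert ha))

end IsPartialDFSTree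

end

theorem extends_to_dfs_tree_general {V : Type*} [Fintype V]
    (G T : SimpleGraph V) (U : Set V) (r : V)
    (hG : G.Connected) (hr : r ∈ U)
    (hT : TreeOn G T U) (h1 : Inv1 G T U r) (h2 : Inv2 G T U r) :
    ∃ Tstar : SimpleGraph V, T ≤ Tstar ∧ Tstar ≤ G ∧ Tstar.IsTree ∧
      ∀ u v, G.Adj u v → Cmp Tstar r u v :=
  (hT.isPartialDFSTree hr h1 h2).exists_dfsTree hG

/-- Correctness principle of Section 2.  Any partially built DFS tree `T` on a nonempty
`U ⊆ V` satisfying invariants `I₁` and `I₂` extends to a DFS tree of `G`: a spanning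
tree `T*` of `G` rooted at `r` containing the edges of `T` in which every edge of `G`
joins two comparable vertices. -/
theorem extends_to_dfs_tree {V : Type*} [Fintype V]
    (G T : SimpleGraph V) (U : Set V) (r : V)
    (hG : G.Connected) (hU : U.Nonempty) (hr : r ∈ U)
    (hT : TreeOn G T U) (h1 : Inv1 G T U r) (h2 : Inv2 G T U r) :
    ∃ Tstar : SimpleGraph V, T ≤ Tstar ∧ Tstar ≤ G ∧ Tstar.IsTree ∧
      ∀ u v, G.Adj u v → Cmp Tstar r u v :=
  extends_to_dfs_tree_general G T U r hG hr hT h1 h2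

end StreamDFS
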